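/- arXiv:1609.04228 — 5 statements merged into one kernel-verified Lean document; each statement's English description precedes it below -/
import Mathlib

section
/- Let γ_k = γ k^{-1} with γ > 0 and a > 0 with aγ > 1. Then there exists a constant C (depending on γ, a) such that for all n ≥ 1, ∑_{k=1}^n γ_k² ∏_{l=k+1}^n (1 − a γ_l)² ≤ C n^{-1}. -/
noncomputable def Sfun (γ a : ℝ) (n : ℕ) : ℝ :=
  ∑ k ∈ Finset.Icc 1 n,
      (γ / (k : ℝ)) ^ 2 * ∏ l ∈ Finset.Icc (k + 1) n, (1 - a * (γ / (l : ℝ))) ^ 2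

lemma Sfun_nonneg (γ a : ℝ) (n : ℕ) : 0 ≤ Sfun γ a n := by
  unfold Sfun; positivity

lemma Sfun_succ (γ a : ℝ) (n : ℕ) :
    Sfun γ a (n + 1)
      = (1 - a * (γ / ((n : ℝ) + 1))) ^ 2 * Sfun γ a n + (γ / ((n : ℝ) + 1)) ^ 2 := by
  unfold Sfun
  rw [Finset.sum_Icc_succ_top (Nat.le_add_left 1 n)]
  have h1 : ∏ l ∈ Finset.Icc (n + 1 + 1) (n + 1), (1 - a * (γ / (l : ℝ))) ^ 2 = 1 := by
    rw [Finset.Icc_eq_empty (by omega), Finset.prod_empty]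
  have h2 : ∀ k ∈ Finset.Icc 1 n,
      (γ / (k : ℝ)) ^ 2 * ∏ l ∈ Finset.Icc (k + 1) (n + 1), (1 - a * (γ / (l : ℝ))) ^ 2
        = (1 - a * (γ / ((n : ℝ) + 1))) ^ 2 *
            ((γ / (k : ℝ)) ^ 2 * ∏ l ∈ Finset.Icc (k + 1) n, (1 - a * (γ / (l : ℝ))) ^ 2) := by
    intro k hk
    have hk' : k + 1 ≤ n + 1 := by
      simp only [Finset.mem_Icc] at hk; omega
    rw [Finset.prod_Icc_succ_top hk']
    push_cast
    ring
  rw [Finset.sum_congr rfl h2, ← Finset.mul_sum, h1]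
  push_cast
  ring

/-- Proposition A.3 (ii), case `aγ > 1`: for `γ_k = γ/k`,
`∑_{k=1}^n γ_k² ∏_{l=k+1}^n (1 − a γ_l)² ≤ C n^{-1}`. -/
theorem stmt_3 (γ a : ℝ) (hγ : 0 < γ) (ha : 0 < a) (h : 1 < a * γ) :
    ∃ C : ℝ, ∀ n : ℕ, 1 ≤ n →
      ∑ k ∈ Finset.Icc 1 n,
          (γ / (k : ℝ)) ^ 2 * ∏ l ∈ Finset.Icc (k + 1) n, (1 - a * (γ / (l : ℝ))) ^ 2
        ≤ C / (n : ℝ) := by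
  set N₀ : ℕ := ⌈a * γ⌉₊ with hN₀
  have hδ : 0 < a * γ - 1 := by linarith
  set C : ℝ := γ ^ 2 / (a * γ - 1) + ∑ m ∈ Finset.Icc 1 N₀, (m : ℝ) * Sfun γ a m with hC
  have hCδ : γ ^ 2 / (a * γ - 1) ≤ C := by
    have : 0 ≤ ∑ m ∈ Finset.Icc 1 N₀, (m : ℝ) * Sfun γ a m :=
      Finset.sum_nonneg fun m _ => mul_nonneg (Nat.cast_nonneg m) (Sfun_nonneg γ a m)
    linarith
  have hC0 : 0 ≤ C := le_trans (by positivity) hCδ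
  refine ⟨C, ?_⟩
  have key : ∀ n : ℕ, 1 ≤ n → Sfun γ a n ≤ C / n := by
    intro n
    induction n with
    | zero => intro h0; omega
    | succ m ih =>
      intro _
      by_cases hsmall : m + 1 ≤ N₀
      · -- small case: use the sum in C
        have hmem : m + 1 ∈ Finset.Icc 1 N₀ := by simp [hsmall]
        have hle : ((m + 1 : ℕ) : ℝ) * Sfun γ a (m + 1)
            ≤ ∑ m' ∈ Finset.Icc 1 N₀, (m' : ℝ) * Sfun γ a m' :=
          Finset.single_le_sum (fun i _ => mul_nonneg (Nat.cast_nonneg i) (Sfun_nonneg γ a i))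
            hmem
        have hCbig : ((m + 1 : ℕ) : ℝ) * Sfun γ a (m + 1) ≤ C := by
          have h0 : (0:ℝ) ≤ γ ^ 2 / (a * γ - 1) := by positivity
          rw [hC]; linarith
        have hpos : (0:ℝ) < ((m + 1 : ℕ) : ℝ) := by positivity
        rw [le_div_iff₀ hpos]
        linarith [hCbig]
      · -- inductive case
        have hmN : N₀ ≤ m := by omega
        have hN1 : 1 ≤ N₀ := Nat.one_le_ceil_iff.mpr (by positivity)
        have hm1 : 1 ≤ m := le_trans hN1 hmN
        have hmaγ : a * γ ≤ (m : ℝ) := by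
          calc a * γ ≤ (N₀ : ℝ) := Nat.le_ceil _
          _ ≤ (m : ℝ) := by exact_mod_cast hmN
        have hM0 : (0:ℝ) < (m : ℝ) := by exact_mod_cast hm1
        have ihm := ih hm1
        rw [Sfun_succ]
        push_cast
        set M : ℝ := (m : ℝ) with hM
        have hstep : (1 - a * (γ / (M + 1))) ^ 2 * (C / M) + (γ / (M + 1)) ^ 2
            ≤ C / (M + 1) := by
          have hM1 : (0:ℝ) < M + 1 := by linarith
          have hγC : γ ^ 2 ≤ C * (a * γ - 1) := by
            rw [div_le_iff₀ hδ] at hCδ; linarith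
          have hMne : M ≠ 0 := ne_of_gt hM0
          have hM1ne : M + 1 ≠ 0 := ne_of_gt hM1
          have key2 : (M + 1 - a * γ) ^ 2 ≤ M * (M + 2 - a * γ) := by
            nlinarith [hmaγ, h]
          have t1 : 0 ≤ C * (M * (M + 2 - a * γ) - (M + 1 - a * γ) ^ 2) :=
            mul_nonneg hC0 (by linarith)
          have t2 : γ ^ 2 * M ≤ C * (a * γ - 1) * M :=
            mul_le_mul_of_nonneg_right hγC hM0.le
          have expand : C / (M + 1) - ((1 - a * (γ / (M + 1))) ^ 2 * (C / M) + (γ / (M + 1)) ^ 2)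
              = (C * (M + 1) * M - ((M + 1 - a * γ) ^ 2 * C + γ ^ 2 * M)) / (M * (M + 1) ^ 2) := by
            field_simp
          have hnum : 0 ≤ C * (M + 1) * M - ((M + 1 - a * γ) ^ 2 * C + γ ^ 2 * M) := by
            nlinarith [t1, t2]
          have := div_nonneg hnum (by positivity : (0:ℝ) ≤ M * (M + 1) ^ 2)
          linarith [expand ▸ this]
        calc (1 - a * (γ / (M + 1))) ^ 2 * Sfun γ a m + (γ / (M + 1)) ^ 2
            ≤ (1 - a * (γ / (M + 1))) ^ 2 * (C / M) + (γ / (M + 1)) ^ 2 := by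
              have := mul_le_mul_of_nonneg_left ihm (by positivity : (0:ℝ) ≤ (1 - a * (γ / (M + 1))) ^ 2)
              linarith
          _ ≤ C / (M + 1) := hstep
  intro n hn
  exact key n hn
end

section
/- Let γ_k = γ k^{-1} with γ > 0, let a > 0, b > 0, ε > 0, and suppose 1 − aγ_l + bγ_l^{1+ε} ≥ 0 for all l ≥ 1. Then for all n ≥ 1, ∑_{k=1}^n γ_{k+1} ∏_{l=k+1}^n (1 − aγ_l + bγ_l^{1+ε}) ≤ (2/a) · exp(b ∑_{l=1}^∞ γ_l^{1+ε}). -/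
/-- Helper: `x * exp (x/2) ≤ exp x - 1` for `0 ≤ x` (equivalent to `x/2 ≤ sinh (x/2)`). -/
lemma aux_mul_exp_half_le (x : ℝ) (hx : 0 ≤ x) :
    x * Real.exp (x / 2) ≤ Real.exp x - 1 := by
  have h := Real.self_le_sinh_iff.mpr (by linarith : (0:ℝ) ≤ x / 2)
  rw [Real.sinh_eq] at h
  have hmul := mul_le_mul_of_nonneg_left h (Real.exp_pos (x / 2)).le
  have h1 : Real.exp (x / 2) * Real.exp (x / 2) = Real.exp x := by
    rw [← Real.exp_add]; ring_nf
  have h2 : Real.exp (x / 2) * Real.exp (-(x / 2)) = 1 := by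
    rw [← Real.exp_add]; simp
  nlinarith [Real.exp_pos (x / 2)]

/-- Helper: telescoping sum over `Icc 1 n`. -/
lemma aux_telescope (g : ℕ → ℝ) (n : ℕ) :
    ∑ k ∈ Finset.Icc 1 n, (g (k + 1) - g k) = g (n + 1) - g 1 := by
  induction n with
  | zero => simp
  | succ m ih =>
      rw [Finset.sum_Icc_succ_top (Nat.succ_le_succ (Nat.zero_le m)), ih]
      ring

set_option maxHeartbeats 1000000 in
/-- Proposition A.3 (iv): for `γ_k = γ/k`, `a, b, ε > 0`, and nonnegative factors,
`∑_{k=1}^n γ_{k+1} ∏_{l=k+1}^n (1 − aγ_l + bγ_l^{1+ε}) ≤ (2/a) exp(b ∑_{l≥1} γ_l^{1+ε})`. -/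
theorem stmt_4 (γ a b ε : ℝ) (hγ : 0 < γ) (ha : 0 < a) (hb : 0 < b) (hε : 0 < ε)
    (hpos : ∀ l : ℕ, 1 ≤ l → 0 ≤ 1 - a * (γ / (l : ℝ)) + b * (γ / (l : ℝ)) ^ (1 + ε))
    (n : ℕ) (hn : 1 ≤ n) :
    ∑ k ∈ Finset.Icc 1 n,
        (γ / ((k : ℝ) + 1)) *
          ∏ l ∈ Finset.Icc (k + 1) n, (1 - a * (γ / (l : ℝ)) + b * (γ / (l : ℝ)) ^ (1 + ε))
      ≤ 2 / a * Real.exp (b * ∑' l : ℕ, (γ / ((l : ℝ) + 1)) ^ (1 + ε)) := by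
  -- notation
  obtain ⟨T, hTdef⟩ : ∃ T : ℝ, T = ∑' l : ℕ, (γ / ((l : ℝ) + 1)) ^ (1 + ε) := ⟨_, rfl⟩
  rw [← hTdef]
  have hcpos : ∀ l : ℕ, (0:ℝ) ≤ γ / l := fun l => div_nonneg hγ.le (Nat.cast_nonneg l)
  have hrpow_nonneg : ∀ l : ℕ, (0:ℝ) ≤ (γ / (l : ℝ)) ^ (1 + ε) :=
    fun l => Real.rpow_nonneg (hcpos l) _
  -- summability
  have hsummable : Summable (fun l : ℕ => (γ / ((l : ℝ) + 1)) ^ (1 + ε)) := by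
    have h1 : Summable (fun l : ℕ => 1 / ((l : ℝ)) ^ (1 + ε)) :=
      Real.summable_one_div_nat_rpow.mpr (by linarith)
    have h2 : Summable (fun l : ℕ => 1 / ((↑(l + 1) : ℝ)) ^ (1 + ε)) :=
      (summable_nat_add_iff 1).mpr h1
    have h3 : Summable (fun l : ℕ => γ ^ (1 + ε) * (1 / ((↑(l + 1) : ℝ)) ^ (1 + ε))) :=
      h2.mul_left _
    refine h3.congr fun l => ?_
    rw [Real.div_rpow hγ.le (by positivity : (0:ℝ) ≤ ((l:ℝ) + 1))]
    push_cast
    ring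
  have hT_nonneg_terms : ∀ l : ℕ, (0:ℝ) ≤ (γ / ((l : ℝ) + 1)) ^ (1 + ε) := fun l =>
    Real.rpow_nonneg (by positivity) _
  -- partial sums S m = ∑_{l=1}^m γ/l
  obtain ⟨S, hSdef⟩ : ∃ S : ℕ → ℝ, S = fun m : ℕ => ∑ l ∈ Finset.Ioc 0 m, γ / (l : ℝ) := ⟨_, rfl⟩
  have hS_succ : ∀ m : ℕ, S (m + 1) = S m + γ / ((m : ℝ) + 1) := by
    intro m
    simp only [hSdef]
    rw [Finset.sum_Ioc_succ_top (Nat.zero_le m)]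
    push_cast
    ring
  -- partial sums of the (1+ε)-powers
  obtain ⟨Q, hQdef⟩ : ∃ Q : ℕ → ℝ, Q = fun m : ℕ => ∑ l ∈ Finset.Ioc 0 m, (γ / (l : ℝ)) ^ (1 + ε) :=
    ⟨_, rfl⟩
  -- any partial power-sum is at most T
  have hQ_le_T : ∀ m : ℕ, Q m ≤ T := by
    intro m
    have hset : Finset.Ioc 0 m = Finset.Ico 1 (m + 1) := by
      ext x
      simp only [Finset.mem_Ioc, Finset.mem_Ico]
      omega
    have hreindex : Q m = ∑ j ∈ Finset.range m, (γ / ((j : ℝ) + 1)) ^ (1 + ε) := by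
      simp only [hQdef, hset]
      rw [Finset.sum_Ico_eq_sum_range]
      simp only [Nat.add_sub_cancel]
      refine Finset.sum_congr rfl fun j _ => ?_
      push_cast
      rw [add_comm 1 (j:ℝ)]
    rw [hreindex, hTdef]
    exact Summable.sum_le_tsum _ (fun i _ => hT_nonneg_terms i) hsummable
  -- key quantities at index n+1
  obtain ⟨y, hydef⟩ : ∃ y : ℝ, y = a * (γ / ((n : ℝ) + 1)) := ⟨_, rfl⟩
  obtain ⟨u, hudef⟩ : ∃ u : ℝ, u = (γ / ((n : ℝ) + 1)) ^ (1 + ε) := ⟨_, rfl⟩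
  have hy_pos : 0 < y := by
    rw [hydef]
    apply mul_pos ha
    positivity
  have hu_nonneg : 0 ≤ u := by
    rw [hudef]
    exact Real.rpow_nonneg (by positivity) _
  have hy_le : y ≤ 1 + b * u := by
    have h := hpos (n + 1) (Nat.le_add_left 1 n)
    push_cast at h
    rw [hydef, hudef]
    linarith
  -- the constant K
  obtain ⟨K, hKdef⟩ : ∃ K : ℝ,
      K = 1 / a * Real.exp (-(y / 2)) * Real.exp (-(a * S n)) * Real.exp (b * (T - u)) := ⟨_, rfl⟩
  have hK_nonneg : 0 ≤ K := by
    rw [hKdef]; positivity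
  -- per-term bound
  have hterm : ∀ k ∈ Finset.Icc 1 n,
      (γ / ((k : ℝ) + 1)) *
          ∏ l ∈ Finset.Icc (k + 1) n, (1 - a * (γ / (l : ℝ)) + b * (γ / (l : ℝ)) ^ (1 + ε))
        ≤ K * (Real.exp (a * S (k + 1)) - Real.exp (a * S k)) := by
    intro k hk
    rw [Finset.mem_Icc] at hk
    obtain ⟨hk1, hkn⟩ := hk
    -- product ≤ exp of sum
    have hprod : ∏ l ∈ Finset.Icc (k + 1) n, (1 - a * (γ / (l : ℝ)) + b * (γ / (l : ℝ)) ^ (1 + ε))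
        ≤ Real.exp (∑ l ∈ Finset.Icc (k + 1) n,
            (-(a * (γ / (l : ℝ))) + b * (γ / (l : ℝ)) ^ (1 + ε))) := by
      rw [Real.exp_sum]
      apply Finset.prod_le_prod
      · intro l hl
        rw [Finset.mem_Icc] at hl
        exact hpos l (by omega)
      · intro l hl
        have := Real.add_one_le_exp (-(a * (γ / (l : ℝ))) + b * (γ / (l : ℝ)) ^ (1 + ε))
        linarith
    -- split the exponent sum
    have hIcc_Ioc : Finset.Icc (k + 1) n = Finset.Ioc k n := Finset.Icc_add_one_left_eq_Ioc k n
    have hsum_c : ∑ l ∈ Finset.Icc (k + 1) n, (γ / (l : ℝ)) = S n - S k := by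
      simp only [hSdef, hIcc_Ioc]
      rw [eq_sub_iff_add_eq, add_comm]
      exact Finset.sum_Ioc_consecutive _ (Nat.zero_le k) hkn
    have hsum_q : ∑ l ∈ Finset.Icc (k + 1) n, (γ / (l : ℝ)) ^ (1 + ε) ≤ T - u := by
      have hqn : Q n + u = Q (n + 1) := by
        simp only [hQdef, hudef]
        rw [Finset.sum_Ioc_succ_top (Nat.zero_le n)]
        push_cast
        ring
      have hQk : ∑ l ∈ Finset.Icc (k + 1) n, (γ / (l : ℝ)) ^ (1 + ε) = Q n - Q k := by
        simp only [hQdef, hIcc_Ioc]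
        rw [eq_sub_iff_add_eq, add_comm]
        exact Finset.sum_Ioc_consecutive _ (Nat.zero_le k) hkn
      have hQk_nonneg : 0 ≤ Q k := by
        simp only [hQdef]
        exact Finset.sum_nonneg fun l _ => hrpow_nonneg l
      have hT1 := hQ_le_T (n + 1)
      rw [hQk]
      linarith
    have hexp_sum : ∑ l ∈ Finset.Icc (k + 1) n,
        (-(a * (γ / (l : ℝ))) + b * (γ / (l : ℝ)) ^ (1 + ε))
        ≤ -(a * (S n - S k)) + b * (T - u) := by
      rw [Finset.sum_add_distrib]
      have e1 : ∑ l ∈ Finset.Icc (k + 1) n, (-(a * (γ / (l : ℝ)))) = -(a * (S n - S k)) := by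
        rw [Finset.sum_neg_distrib, ← Finset.mul_sum, hsum_c]
      have e2 : ∑ l ∈ Finset.Icc (k + 1) n, b * (γ / (l : ℝ)) ^ (1 + ε)
          = b * ∑ l ∈ Finset.Icc (k + 1) n, (γ / (l : ℝ)) ^ (1 + ε) :=
        (Finset.mul_sum _ _ _).symm
      rw [e1, e2]
      have := mul_le_mul_of_nonneg_left hsum_q hb.le
      linarith
    have hprod2 : ∏ l ∈ Finset.Icc (k + 1) n, (1 - a * (γ / (l : ℝ)) + b * (γ / (l : ℝ)) ^ (1 + ε))
        ≤ Real.exp (-(a * (S n - S k)) + b * (T - u)) :=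
      hprod.trans (Real.exp_le_exp.mpr hexp_sum)
    -- the key exp-difference estimate
    obtain ⟨x, hxdef⟩ : ∃ x : ℝ, x = a * (γ / ((k : ℝ) + 1)) := ⟨_, rfl⟩
    have hx_pos : 0 < x := by
      rw [hxdef]; apply mul_pos ha; positivity
    have hxy : y ≤ x := by
      rw [hxdef, hydef]
      have h1 : ((k:ℝ) + 1) ≤ ((n:ℝ) + 1) := by
        have : (k : ℝ) ≤ n := Nat.cast_le.mpr hkn
        linarith
      gcongr
    have hdiff : x * Real.exp (y / 2) ≤ Real.exp x - 1 := by
      have h1 := aux_mul_exp_half_le x hx_pos.le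
      have h2 : Real.exp (y / 2) ≤ Real.exp (x / 2) := Real.exp_le_exp.mpr (by linarith)
      nlinarith [hx_pos]
    -- gather
    have hEy : Real.exp (-(y / 2)) * Real.exp (y / 2) = 1 := by
      rw [← Real.exp_add]; simp
    have hkey : (γ / ((k : ℝ) + 1)) * Real.exp (a * S k)
        ≤ 1 / a * Real.exp (-(y / 2)) * (Real.exp (a * S (k + 1)) - Real.exp (a * S k)) := by
      have hED : Real.exp (a * S (k + 1)) - Real.exp (a * S k)
          = Real.exp (a * S k) * (Real.exp x - 1) := by
        have hSx : a * S (k + 1) = a * S k + x := by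
          rw [hS_succ k, hxdef]; ring
        rw [hSx, Real.exp_add]; ring
      rw [hED]
      have h3 : Real.exp (a * S k) * (x * Real.exp (y / 2))
          ≤ Real.exp (a * S k) * (Real.exp x - 1) :=
        mul_le_mul_of_nonneg_left hdiff (Real.exp_pos _).le
      have h4 : (γ / ((k : ℝ) + 1)) * Real.exp (a * S k)
          = 1 / a * Real.exp (-(y / 2)) * (Real.exp (a * S k) * (x * Real.exp (y / 2))) := by
        have h5 : 1 / a * Real.exp (-(y / 2)) * (Real.exp (a * S k) * (x * Real.exp (y / 2)))
            = (a * (1 / a)) * (Real.exp (-(y / 2)) * Real.exp (y / 2)) *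
              ((γ / ((k : ℝ) + 1)) * Real.exp (a * S k)) := by
          rw [hxdef]; ring
        rw [h5, hEy, mul_one_div_cancel ha.ne', one_mul, one_mul]
      rw [h4]
      exact mul_le_mul_of_nonneg_left h3 (by positivity)
    -- combine everything
    have hc1 : (0:ℝ) ≤ γ / ((k : ℝ) + 1) := by positivity
    calc (γ / ((k : ℝ) + 1)) *
            ∏ l ∈ Finset.Icc (k + 1) n, (1 - a * (γ / (l : ℝ)) + b * (γ / (l : ℝ)) ^ (1 + ε))
        ≤ (γ / ((k : ℝ) + 1)) * Real.exp (-(a * (S n - S k)) + b * (T - u)) :=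
          mul_le_mul_of_nonneg_left hprod2 hc1
      _ = ((γ / ((k : ℝ) + 1)) * Real.exp (a * S k)) *
            (Real.exp (-(a * S n)) * Real.exp (b * (T - u))) := by
          simp only [mul_assoc, ← Real.exp_add]
          congr 1
          congr 1
          ring
      _ ≤ (1 / a * Real.exp (-(y / 2)) * (Real.exp (a * S (k + 1)) - Real.exp (a * S k))) *
            (Real.exp (-(a * S n)) * Real.exp (b * (T - u))) :=
          mul_le_mul_of_nonneg_right hkey (by positivity)
      _ = K * (Real.exp (a * S (k + 1)) - Real.exp (a * S k)) := by
          rw [hKdef]; ring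
  -- sum the per-term bounds and telescope
  have hsum : ∑ k ∈ Finset.Icc 1 n,
        (γ / ((k : ℝ) + 1)) *
          ∏ l ∈ Finset.Icc (k + 1) n, (1 - a * (γ / (l : ℝ)) + b * (γ / (l : ℝ)) ^ (1 + ε))
      ≤ K * (Real.exp (a * S (n + 1)) - Real.exp (a * S 1)) := by
    calc ∑ k ∈ Finset.Icc 1 n,
          (γ / ((k : ℝ) + 1)) *
            ∏ l ∈ Finset.Icc (k + 1) n, (1 - a * (γ / (l : ℝ)) + b * (γ / (l : ℝ)) ^ (1 + ε))
        ≤ ∑ k ∈ Finset.Icc 1 n, K * (Real.exp (a * S (k + 1)) - Real.exp (a * S k)) :=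
          Finset.sum_le_sum hterm
      _ = K * ∑ k ∈ Finset.Icc 1 n, (Real.exp (a * S (k + 1)) - Real.exp (a * S k)) := by
          rw [Finset.mul_sum]
      _ = K * (Real.exp (a * S (n + 1)) - Real.exp (a * S 1)) := by
          rw [aux_telescope (fun m => Real.exp (a * S m)) n]
  -- final numeric bound
  have hfinal : K * (Real.exp (a * S (n + 1)) - Real.exp (a * S 1))
      ≤ 2 / a * Real.exp (b * T) := by
    have h1 : K * (Real.exp (a * S (n + 1)) - Real.exp (a * S 1))
        ≤ K * Real.exp (a * S (n + 1)) := by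
      apply mul_le_mul_of_nonneg_left _ hK_nonneg
      have := Real.exp_pos (a * S 1)
      linarith
    have h2 : K * Real.exp (a * S (n + 1)) = 1 / a * Real.exp ((y / 2 - b * u) + b * T) := by
      have hSn1 : a * S (n + 1) = a * S n + y := by
        rw [hS_succ n, hydef]; ring
      rw [hKdef, hSn1]
      simp only [mul_assoc, ← Real.exp_add]
      congr 1
      congr 1
      ring
    have h3 : Real.exp (y / 2 - b * u) ≤ 2 := by
      have harg : y / 2 - b * u ≤ 1 / 2 := by
        have hbu : 0 ≤ b * u := mul_nonneg hb.le hu_nonneg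
        linarith
      have h4 : Real.exp (y / 2 - b * u) ≤ Real.exp (1 / 2) := Real.exp_le_exp.mpr harg
      have h5 : Real.exp (1 / 2) ≤ 2 := by
        have h6 := Real.exp_one_lt_d9
        have h7 : Real.exp (1 / 2) * Real.exp (1 / 2) = Real.exp 1 := by
          rw [← Real.exp_add]; norm_num
        nlinarith [Real.exp_pos (1 / 2 : ℝ)]
      linarith
    calc K * (Real.exp (a * S (n + 1)) - Real.exp (a * S 1))
        ≤ K * Real.exp (a * S (n + 1)) := h1
      _ = 1 / a * (Real.exp (y / 2 - b * u) * Real.exp (b * T)) := by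
          rw [h2, ← Real.exp_add]
      _ ≤ 1 / a * (2 * Real.exp (b * T)) := by
          apply mul_le_mul_of_nonneg_left _ (by positivity)
          exact mul_le_mul_of_nonneg_right h3 (Real.exp_pos _).le
      _ = 2 / a * Real.exp (b * T) := by ring
  exact hsum.trans hfinal
end

section
/- Let f : ℝ^d → ℝ be C², coercive, with ‖∇f(x)‖² ≤ c_f f(x) for all x and some c_f > 0, and suppose f ≥ 0. Fix r > 0 and positive constants a, b with a/b > max(1/2, r(c_f − 1)). Define V(x,y) = (a + b r) f(x) + (a/(2r)) ‖y‖² − b ⟨∇f(x), y⟩. Then there exists C₁ > 0 such that for all x, y ∈ ℝ^d, V(x,y) ≥ C₁ (f(x) + ‖y‖²/r). -/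
/-!
Young's inequality with weight `r` gives `b⟨∇f(x), y⟩ ≤ b r ‖∇f(x)‖² + b‖y‖²/(4r)`, and
`‖∇f(x)‖² ≤ c_f f(x)` then leaves `V(x,y) ≥ (a - b r (c_f - 1)) f(x) + ((2a - b)/4) ‖y‖²/r`.
Both coefficients are positive exactly because `a/b > r(c_f - 1)` and `a/b > 1/2`.
-/

open RealInnerProductSpace

theorem min_mul_add_le_mul_add_mul {α β p q : ℝ} (hp : 0 ≤ p) (hq : 0 ≤ q) :
    min α β * (p + q) ≤ α * p + β * q := by
  rw [mul_add]
  exact add_le_add (mul_le_mul_of_nonneg_right (min_le_left _ _) hp)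
    (mul_le_mul_of_nonneg_right (min_le_right _ _) hq)

variable {E : Type*} [NormedAddCommGroup E] [InnerProductSpace ℝ E]

theorem real_inner_le_mul_norm_sq_add_norm_sq_div {r : ℝ} (hr : 0 < r) (u v : E) :
    ⟪u, v⟫ ≤ r * ‖u‖ ^ 2 + ‖v‖ ^ 2 / (4 * r) := by
  have hyoung : ‖u‖ * ‖v‖ ≤ r * ‖u‖ ^ 2 + ‖v‖ ^ 2 / (4 * r) := by
    have hsq : r * ‖u‖ ^ 2 + ‖v‖ ^ 2 / (4 * r) - ‖u‖ * ‖v‖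
        = (2 * r * ‖u‖ - ‖v‖) ^ 2 / (4 * r) := by
      field_simp
      ring
    rw [← sub_nonneg, hsq]
    positivity
  exact (real_inner_le_norm u v).trans hyoung

theorem lyapunov_lower_bound {r a b c φ : ℝ} (hr : 0 < r) (hb : 0 ≤ b) {u y : E}
    (hu : ‖u‖ ^ 2 ≤ c * φ) :
    (a - b * r * (c - 1)) * φ + (2 * a - b) / 4 * (‖y‖ ^ 2 / r) ≤
      (a + b * r) * φ + a / (2 * r) * ‖y‖ ^ 2 - b * ⟪u, y⟫ := by
  have hinner : b * ⟪u, y⟫ ≤ b * r * (c * φ) + b * (‖y‖ ^ 2 / (4 * r)) := calc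
    b * ⟪u, y⟫ ≤ b * (r * ‖u‖ ^ 2 + ‖y‖ ^ 2 / (4 * r)) :=
      mul_le_mul_of_nonneg_left (real_inner_le_mul_norm_sq_add_norm_sq_div hr u y) hb
    _ = b * r * ‖u‖ ^ 2 + b * (‖y‖ ^ 2 / (4 * r)) := by ring
    _ ≤ b * r * (c * φ) + b * (‖y‖ ^ 2 / (4 * r)) := by gcongr
  have hy : (2 * a - b) / 4 * (‖y‖ ^ 2 / r) =
      a / (2 * r) * ‖y‖ ^ 2 - b * (‖y‖ ^ 2 / (4 * r)) := by
    field_simp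
    ring
  linarith

theorem stmt_6_general {d : ℕ} (f : EuclideanSpace ℝ (Fin d) → ℝ)
    (hfnonneg : ∀ x, 0 ≤ f x)
    (c_f : ℝ)
    (hgrad : ∀ x, ‖gradient f x‖ ^ 2 ≤ c_f * f x)
    (r a b : ℝ) (hr : 0 < r) (hb : 0 < b)
    (hab : max (1 / 2) (r * (c_f - 1)) < a / b) :
    ∃ C₁ > 0, ∀ x y : EuclideanSpace ℝ (Fin d),
      C₁ * (f x + ‖y‖ ^ 2 / r) ≤
        (a + b * r) * f x + a / (2 * r) * ‖y‖ ^ 2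
          - b * (inner ℝ (gradient f x) y : ℝ) := by
  obtain ⟨hhalf, hgap⟩ := max_lt_iff.mp hab
  rw [lt_div_iff₀ hb] at hhalf hgap
  refine ⟨min (a - b * r * (c_f - 1)) ((2 * a - b) / 4),
    lt_min (by nlinarith) (by linarith), fun x y => ?_⟩
  exact (min_mul_add_le_mul_add_mul (hfnonneg x) (by positivity)).trans
    (lyapunov_lower_bound hr hb.le (hgrad x))

/-- Lemma 2.1 (i) (exponential memory case `r_n = r`): coercivity of the hypocoercive
Lyapunov function `V(x,y) = (a + br) f(x) + (a/(2r))‖y‖² − b⟨∇f(x), y⟩`. -/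
theorem stmt_6 {d : ℕ} (f : EuclideanSpace ℝ (Fin d) → ℝ)
    (hf : ContDiff ℝ 2 f)
    (hcoer : Filter.Tendsto f (Filter.cocompact _) Filter.atTop)
    (hfnonneg : ∀ x, 0 ≤ f x)
    (c_f : ℝ) (hc : 0 < c_f)
    (hgrad : ∀ x, ‖gradient f x‖ ^ 2 ≤ c_f * f x)
    (r a b : ℝ) (hr : 0 < r) (ha : 0 < a) (hb : 0 < b)
    (hab : max (1 / 2) (r * (c_f - 1)) < a / b) :
    ∃ C₁ > 0, ∀ x y : EuclideanSpace ℝ (Fin d),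
      C₁ * (f x + ‖y‖ ^ 2 / r) ≤
        (a + b * r) * f x + a / (2 * r) * ‖y‖ ^ 2
          - b * (inner ℝ (gradient f x) y : ℝ) :=
  stmt_6_general f hfnonneg c_f hgrad r a b hr hb hab
end

section
/- Let (u_n) be a sequence of nonnegative reals, let γ_n = γ n^{-β} with γ > 0 and β ∈ (0,1), and suppose there exist a > 0, b ≥ 0, C ≥ 0 and n₀ ≥ 1 such that u_{n+1} ≤ (1 − a γ_{n+1} + b γ_{n+1}²) u_n + C γ_{n+1}² for all n ≥ n₀. Then there exists a constant K such that u_n ≤ K γ_n for all n ≥ 1. -/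
open Real Filter Topology

/-- Mean-value type inequality: `x^(-β) - (x+1)^(-β) ≤ β x^(-β)/x`. -/
lemma stmt_10_aux_mv (x β : ℝ) (hx : 1 ≤ x) (hβ0 : 0 < β) (hβ1 : β < 1) :
    x ^ (-β) - (x + 1) ^ (-β) ≤ β * x ^ (-β) / x := by
  have hx0 : 0 < x := lt_of_lt_of_le one_pos hx
  have hsplit : (x + 1) ^ (-β) = x ^ (-β) * (1 + 1 / x) ^ (-β) := by
    rw [← Real.mul_rpow hx0.le (by positivity)]
    congr 1
    field_simp
  have hbern : (1 + 1 / x) ^ β ≤ 1 + β * (1 / x) :=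
    rpow_one_add_le_one_add_mul_self (le_trans (by norm_num : (-1:ℝ) ≤ 0) (by positivity)) hβ0.le hβ1.le
  have hpos : (0:ℝ) < 1 + β * (1 / x) := by positivity
  have h2 : (1 + β * (1/x))⁻¹ ≤ (1 + 1/x) ^ (-β) := by
    rw [Real.rpow_neg (by positivity)]
    exact inv_anti₀ (by positivity) hbern
  have h3 : 1 - β * (1/x) ≤ (1 + β * (1/x))⁻¹ := by
    have hinv : (1 + β * (1/x)) * (1 + β * (1/x))⁻¹ = 1 := mul_inv_cancel₀ hpos.ne'
    have hinvpos : 0 < (1 + β * (1/x))⁻¹ := inv_pos.mpr hpos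
    nlinarith [sq_nonneg (β * (1/x))]
  have hxb : (0:ℝ) < x ^ (-β) := Real.rpow_pos_of_pos hx0 _
  have h4 : x ^ (-β) * (1 - β * (1/x)) ≤ x ^ (-β) * (1 + 1/x) ^ (-β) :=
    mul_le_mul_of_nonneg_left (h3.trans h2) hxb.le
  have h5 : β * x ^ (-β) / x = x ^ (-β) * (1 - (1 - β * (1/x))) := by
    field_simp
    ring
  rw [hsplit, h5]
  linarith

set_option maxHeartbeats 1000000 in
/-- Standard recursion lemma: if `u_{n+1} ≤ (1 − aγ_{n+1} + bγ_{n+1}²) u_n + Cγ_{n+1}²`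
with `γ_n = γ n^{-β}`, `β ∈ (0,1)`, then `u_n ≤ K γ_n` for all `n ≥ 1`. -/
theorem stmt_10 (u : ℕ → ℝ) (hu : ∀ n, 0 ≤ u n) (γ β : ℝ) (hγ : 0 < γ)
    (hβ : β ∈ Set.Ioo (0 : ℝ) 1) (a b C : ℝ) (ha : 0 < a) (hb : 0 ≤ b) (hC : 0 ≤ C)
    (n₀ : ℕ) (hn₀ : 1 ≤ n₀)
    (hrec : ∀ n, n₀ ≤ n →
      u (n + 1) ≤ (1 - a * (γ * ((n : ℝ) + 1) ^ (-β)) + b * (γ * ((n : ℝ) + 1) ^ (-β)) ^ 2) * u n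
        + C * (γ * ((n : ℝ) + 1) ^ (-β)) ^ 2) :
    ∃ K : ℝ, ∀ n : ℕ, 1 ≤ n → u n ≤ K * (γ * (n : ℝ) ^ (-β)) := by
  obtain ⟨hβ0, hβ1⟩ := hβ
  -- the step sizes tend to 0
  have hnat : Tendsto (fun n : ℕ => ((n : ℝ) + 1)) atTop atTop :=
    tendsto_atTop_add_const_right atTop 1 tendsto_natCast_atTop_atTop
  have htend : Tendsto (fun n : ℕ => γ * ((n : ℝ) + 1) ^ (-β)) atTop (nhds 0) := by
    have h := ((tendsto_rpow_neg_atTop hβ0).comp hnat).const_mul γ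
    simpa using h
  have E1 : ∀ᶠ n : ℕ in atTop, a * (γ * ((n : ℝ) + 1) ^ (-β)) ≤ 1 := by
    have h := htend.const_mul a
    rw [mul_zero] at h
    exact (h.eventually_lt_const one_pos).mono fun n hn => hn.le
  have E2 : ∀ᶠ n : ℕ in atTop, b * (γ * ((n : ℝ) + 1) ^ (-β)) ≤ a / 4 := by
    have h := htend.const_mul b
    rw [mul_zero] at h
    exact (h.eventually_lt_const (by positivity)).mono fun n hn => hn.le
  have E3 : ∀ᶠ n : ℕ in atTop, β ≤ a * γ / 8 * (n : ℝ) ^ ((1:ℝ) - β) := by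
    have h : Tendsto (fun n : ℕ => a * γ / 8 * (n : ℝ) ^ ((1:ℝ) - β)) atTop atTop :=
      ((tendsto_rpow_atTop (by linarith)).comp tendsto_natCast_atTop_atTop).const_mul_atTop
        (by positivity)
    exact h.eventually_ge_atTop β
  obtain ⟨N, hN⟩ := eventually_atTop.mp ((E1.and E2).and E3)
  set n₁ : ℕ := max N (max n₀ 1) with hn₁def
  have hn₁1 : 1 ≤ n₁ := le_trans (le_max_right n₀ 1) (le_max_right _ _)
  have hn₁N : N ≤ n₁ := le_max_left _ _
  have hn₁n₀ : n₀ ≤ n₁ := le_trans (le_max_left n₀ 1) (le_max_right _ _)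
  have hne : (Finset.Icc 1 n₁).Nonempty := ⟨1, Finset.mem_Icc.mpr ⟨le_refl 1, hn₁1⟩⟩
  set K : ℝ := max (2 * C / a)
    ((Finset.Icc 1 n₁).sup' hne fun m => u m / (γ * (m : ℝ) ^ (-β))) with hKdef
  clear_value n₁
  have hK0 : 0 ≤ K := le_trans (by positivity) (le_max_left _ _)
  have hKC : C ≤ a / 2 * K := by
    have h1 : 2 * C / a ≤ K := le_max_left _ _
    rw [div_le_iff₀ ha] at h1
    linarith
  clear_value K
  -- base case bound
  have hbase : ∀ m : ℕ, 1 ≤ m → m ≤ n₁ → u m ≤ K * (γ * (m : ℝ) ^ (-β)) := by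
    intro m hm1 hm2
    have hmpos : (0:ℝ) < (m : ℝ) := by exact_mod_cast hm1
    have hg : (0:ℝ) < γ * (m : ℝ) ^ (-β) := by positivity
    have h1 : u m / (γ * (m : ℝ) ^ (-β)) ≤ K :=
      le_trans (Finset.le_sup' (fun m => u m / (γ * (m : ℝ) ^ (-β)))
        (Finset.mem_Icc.mpr ⟨hm1, hm2⟩)) ((le_max_right _ _).trans_eq hKdef.symm)
    rw [div_le_iff₀ hg] at h1
    linarith
  -- inductive claim from n₁ onward
  have claim : ∀ n : ℕ, n₁ ≤ n → u n ≤ K * (γ * (n : ℝ) ^ (-β)) := by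
    intro n hn
    induction n, hn using Nat.le_induction with
    | base => exact hbase n₁ hn₁1 le_rfl
    | succ n hn ih =>
      have hnN : N ≤ n := le_trans hn₁N hn
      obtain ⟨⟨hC1, hC2⟩, hC3⟩ := hN n hnN
      have hn1 : 1 ≤ n := le_trans hn₁1 hn
      have hx : (1:ℝ) ≤ (n : ℝ) := by exact_mod_cast hn1
      have hx0 : (0:ℝ) < (n : ℝ) := lt_of_lt_of_le one_pos hx
      set x : ℝ := (n : ℝ) with hxdef
      set g : ℝ := γ * x ^ (-β) with hgdef
      set γ' : ℝ := γ * (x + 1) ^ (-β) with hγ'def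
      clear_value x g γ'
      have hg : 0 < g := by rw [hgdef]; positivity
      have hγ'pos : 0 < γ' := by rw [hγ'def]; positivity
      -- γ' ≤ g
      have hmono : γ' ≤ g := by
        have h := Real.rpow_le_rpow_of_nonpos hx0 (by linarith : x ≤ x + 1)
          (by linarith : -β ≤ 0)
        rw [hgdef, hγ'def]
        exact mul_le_mul_of_nonneg_left h hγ.le
      -- g ≤ 2 γ'
      have hhalf : g ≤ 2 * γ' := by
        have h1 : (2 * x) ^ (-β) ≤ (x + 1) ^ (-β) :=
          Real.rpow_le_rpow_of_nonpos (by linarith) (by linarith) (by linarith)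
        have h2 : (2 * x) ^ (-β) = 2 ^ (-β) * x ^ (-β) :=
          Real.mul_rpow (by norm_num) hx0.le
        have h3 : (1/2 : ℝ) ≤ 2 ^ (-β) := by
          have h := Real.rpow_le_rpow_of_exponent_le (one_le_two)
            (by linarith : -(1:ℝ) ≤ -β)
          rwa [Real.rpow_neg_one, show ((2:ℝ))⁻¹ = 1/2 by norm_num] at h
        have hxb : (0:ℝ) < x ^ (-β) := Real.rpow_pos_of_pos hx0 _
        have h4 : (1/2) * x ^ (-β) ≤ (x + 1) ^ (-β) := by
          calc (1/2) * x ^ (-β) ≤ 2 ^ (-β) * x ^ (-β) :=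
                mul_le_mul_of_nonneg_right h3 hxb.le
            _ = (2 * x) ^ (-β) := h2.symm
            _ ≤ (x + 1) ^ (-β) := h1
        have h5 := mul_le_mul_of_nonneg_left h4 hγ.le
        rw [hgdef, hγ'def]
        nlinarith
      -- mean value bound
      have hmv : g - γ' ≤ β * g / x := by
        have h := stmt_10_aux_mv x β hx hβ0 hβ1
        have h' := mul_le_mul_of_nonneg_left h hγ.le
        rw [hgdef, hγ'def]
        calc γ * x ^ (-β) - γ * (x + 1) ^ (-β) = γ * (x ^ (-β) - (x + 1) ^ (-β)) := by ring
          _ ≤ γ * (β * x ^ (-β) / x) := h'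
          _ = β * (γ * x ^ (-β)) / x := by ring
      -- from C3 : β g / x ≤ (a/4) γ' g
      have hC3' : β * g / x ≤ a / 4 * (γ' * g) := by
        have hsplitx : x ^ ((1:ℝ) - β) = x * x ^ (-β) := by
          rw [show (1:ℝ) - β = 1 + (-β) by ring, Real.rpow_add hx0, Real.rpow_one]
        rw [hsplitx] at hC3
        have h1 : β / x ≤ a / 8 * g := by
          rw [div_le_iff₀ hx0, hgdef]
          calc β ≤ a * γ / 8 * (x * x ^ (-β)) := hC3
            _ = a / 8 * (γ * x ^ (-β)) * x := by ring
        have h2 : a / 8 * g ≤ a / 4 * γ' := by nlinarith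
        calc β * g / x = (β / x) * g := by ring
          _ ≤ (a / 8 * g) * g := mul_le_mul_of_nonneg_right h1 hg.le
          _ ≤ (a / 4 * γ') * g := mul_le_mul_of_nonneg_right h2 hg.le
          _ = a / 4 * (γ' * g) := by ring
      -- pieces
      have p1 : K * g - K * γ' ≤ K * (a / 4 * (γ' * g)) := by
        have h := mul_le_mul_of_nonneg_left (hmv.trans hC3') hK0
        have h' := mul_le_mul_of_nonneg_left hmv hK0
        linarith [mul_le_mul_of_nonneg_left hC3' hK0,
          (by ring : K * (g - γ') = K * g - K * γ')]
      have p2 : K * (b * γ' ^ 2 * g) ≤ K * (a / 4 * (γ' * g)) := by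
        have h := mul_le_mul_of_nonneg_right hC2 (mul_nonneg (mul_nonneg hK0 hγ'pos.le) hg.le)
        nlinarith
      have p3 : C * γ' ^ 2 ≤ a / 2 * K * (γ' * g) := by
        have h1 : C * γ' ^ 2 ≤ (a / 2 * K) * γ' ^ 2 :=
          mul_le_mul_of_nonneg_right hKC (by positivity)
        have h2 : (a / 2 * K) * γ' ^ 2 ≤ (a / 2 * K) * (γ' * g) := by
          have h3 : γ' ^ 2 ≤ γ' * g := by nlinarith
          exact mul_le_mul_of_nonneg_left h3 (by positivity)
        linarith
      have hbγ : 0 ≤ b * γ' ^ 2 := by positivity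
      have hfac : 0 ≤ 1 - a * γ' + b * γ' ^ 2 := by linarith
      have hrec' := hrec n (le_trans hn₁n₀ hn)
      rw [← hxdef] at hrec'
      rw [← hγ'def] at hrec'
      have hmid : (1 - a * γ' + b * γ' ^ 2) * u n + C * γ' ^ 2
          ≤ (1 - a * γ' + b * γ' ^ 2) * (K * g) + C * γ' ^ 2 := by
        have h := mul_le_mul_of_nonneg_left ih hfac
        linarith
      have hfin : (1 - a * γ' + b * γ' ^ 2) * (K * g) + C * γ' ^ 2 ≤ K * γ' := by
        nlinarith [p1, p2, p3]
      have hgoal : u (n + 1) ≤ K * γ' := le_trans hrec' (le_trans hmid hfin)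
      have hcast : ((n + 1 : ℕ) : ℝ) = x + 1 := by rw [hxdef]; push_cast; ring
      rw [hcast, ← hγ'def]
      exact hgoal
  refine ⟨K, fun n hn => ?_⟩
  rcases le_or_gt n n₁ with h | h
  · exact hbase n hn h
  · exact claim n h.le
end

section
/- Let (u_n^{(k)}) for k = 1, …, K be nonnegative sequences, γ_n = γ n^{-β} with β ∈ (0,1), satisfying u_{n+1}^{(k)} ≤ (1 − a_k γ_{n+1} + b_k γ_{n+1}²) u_n^{(k)} + C_k (γ_{n+1}² + γ_{n+1} u_n^{(k+1)}) for 1 ≤ k ≤ K−1 and all n, where min_k a_k > 0 and max_k b_k < ∞, and such that u_n^{(K)} ≤ C γ_n for all n. Then there exists a constant C' such that u_n^{(k)} ≤ C' γ_n for all n ≥ 1 and every k ∈ {1, …, K}. -/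
open Filter Real

lemma gam_ratio {β : ℝ} (hβ0 : 0 < β) (hβ1 : β < 1) (n : ℕ) (hn : 1 ≤ n) :
    ((n : ℝ)) ^ (-β) ≤ (1 + β / n) * ((n : ℝ) + 1) ^ (-β) := by
  have hn0 : (0:ℝ) < n := by exact_mod_cast hn
  have key : ((n:ℝ) + 1) ^ β ≤ (1 + β / n) * (n:ℝ) ^ β := by
    have hber : (1 + 1/(n:ℝ)) ^ β ≤ 1 + β * (1/n) :=
      rpow_one_add_le_one_add_mul_self (le_trans (by norm_num : (-1:ℝ) ≤ 0) (by positivity)) hβ0.le hβ1.le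
    have heq : ((n:ℝ) + 1) ^ β = (n:ℝ) ^ β * (1 + 1/(n:ℝ)) ^ β := by
      rw [← Real.mul_rpow hn0.le (by positivity)]
      congr 1
      field_simp
    rw [heq]
    calc (n:ℝ) ^ β * (1 + 1/(n:ℝ)) ^ β ≤ (n:ℝ) ^ β * (1 + β * (1/n)) :=
          mul_le_mul_of_nonneg_left hber (by positivity)
      _ = (1 + β / n) * (n:ℝ) ^ β := by ring
  have h2 : (0:ℝ) < (n:ℝ)^β := by positivity
  have h3 : (0:ℝ) < ((n:ℝ)+1)^β := by positivity
  rw [Real.rpow_neg hn0.le, Real.rpow_neg (by positivity : (0:ℝ) ≤ (n:ℝ)+1),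
    inv_eq_one_div, ← div_eq_mul_inv, div_le_div_iff₀ h2 h3]
  linarith

lemma gam_two {β : ℝ} (hβ0 : 0 < β) (hβ1 : β < 1) (n : ℕ) (hn : 1 ≤ n) :
    ((n : ℝ)) ^ (-β) ≤ 2 * ((n : ℝ) + 1) ^ (-β) := by
  have hn0 : (0:ℝ) < n := by exact_mod_cast hn
  have h1 : β / n ≤ 1 := by
    rw [div_le_one hn0]
    have : (1:ℝ) ≤ n := by exact_mod_cast hn
    linarith
  calc ((n : ℝ)) ^ (-β) ≤ (1 + β / n) * ((n : ℝ) + 1) ^ (-β) := gam_ratio hβ0 hβ1 n hn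
    _ ≤ 2 * ((n : ℝ) + 1) ^ (-β) := by
        apply mul_le_mul_of_nonneg_right (by linarith) (by positivity)

lemma single {γ β : ℝ} (hγ : 0 < γ) (hβ0 : 0 < β) (hβ1 : β < 1)
    {u : ℕ → ℝ} (hu : ∀ n, 0 ≤ u n) {a b D : ℝ} (ha : 0 < a) (hb : 0 ≤ b) (hD : 0 ≤ D)
    (hrec : ∀ n : ℕ, 1 ≤ n → u (n+1) ≤
      (1 - a*(γ*((n:ℝ)+1)^(-β)) + b*(γ*((n:ℝ)+1)^(-β))^2) * u n + D*(γ*((n:ℝ)+1)^(-β))^2) :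
    ∃ C', 0 ≤ C' ∧ ∀ n : ℕ, 1 ≤ n → u n ≤ C' * (γ * (n:ℝ)^(-β)) := by
  have t1 : Tendsto (fun n : ℕ => γ * ((n:ℝ)+1)^(-β)) atTop (nhds 0) := by
    have h := ((tendsto_rpow_neg_atTop hβ0).comp
      (tendsto_atTop_add_const_right atTop (1:ℝ) tendsto_natCast_atTop_atTop)).const_mul γ
    simpa using h
  have t2 : Tendsto (fun n : ℕ => β * ((n:ℝ))^(β-1)) atTop (nhds 0) := by
    have h := ((tendsto_rpow_neg_atTop (by linarith : (0:ℝ) < 1 - β)).comp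
      tendsto_natCast_atTop_atTop).const_mul β
    have : (fun n : ℕ => β * ((n:ℝ))^(β-1)) = fun n : ℕ => β * ((n:ℝ))^(-(1-β)) := by
      funext n; ring_nf
    rw [this]; simpa using h
  have e1 : ∀ᶠ n : ℕ in atTop, b * (γ * ((n:ℝ)+1)^(-β)) ≤ a/4 := by
    have := (t1.const_mul b).eventually (ge_mem_nhds (by simp; positivity : b * (0:ℝ) < a/4))
    simpa using this
  have e2 : ∀ᶠ n : ℕ in atTop, a * (γ * ((n:ℝ)+1)^(-β)) ≤ 1/2 := by
    have := (t1.const_mul a).eventually (ge_mem_nhds (by simp : a * (0:ℝ) < 1/2))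
    simpa using this
  have e3 : ∀ᶠ n : ℕ in atTop, β * ((n:ℝ))^(β-1) ≤ a*γ/8 := by
    have := t2.eventually (ge_mem_nhds (by positivity : (0:ℝ) < a*γ/8))
    simpa using this
  obtain ⟨N, hN⟩ := ((e1.and e2).and e3).exists_forall_of_atTop
  set N' := max N 1 with hN'
  have hN'1 : 1 ≤ N' := le_max_right _ _
  have hne : (Finset.Icc 1 N').Nonempty := ⟨1, by simp [hN'1]⟩
  set M := (Finset.Icc 1 N').sup' hne (fun m => u m / (γ * (m:ℝ)^(-β))) with hM
  set C' := max (max M 0) (2*D/a) with hC'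
  have hC0 : 0 ≤ C' := le_trans (le_max_right M 0) (le_max_left _ _)
  have hCD : 2*D ≤ a*C' := by
    have h1 : 2*D/a ≤ C' := le_max_right _ _
    rw [div_le_iff₀ ha] at h1
    linarith
  have hgpos : ∀ m : ℕ, 1 ≤ m → 0 < γ * (m:ℝ)^(-β) := by
    intro m hm
    have : (0:ℝ) < m := by exact_mod_cast hm
    positivity
  have base : ∀ m ∈ Finset.Icc 1 N', u m ≤ C' * (γ * (m:ℝ)^(-β)) := by
    intro m hm
    have hm1 : 1 ≤ m := (Finset.mem_Icc.mp hm).1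
    have h1 : u m / (γ * (m:ℝ)^(-β)) ≤ M :=
      Finset.le_sup' (fun m => u m / (γ * (m:ℝ)^(-β))) hm
    have h2 : u m / (γ * (m:ℝ)^(-β)) ≤ C' :=
      le_trans h1 (le_trans (le_max_left M 0) (le_max_left _ _))
    rw [div_le_iff₀ (hgpos m hm1)] at h2
    exact h2
  have step : ∀ n : ℕ, N' ≤ n → u n ≤ C' * (γ * (n:ℝ)^(-β)) →
      u (n+1) ≤ C' * (γ * ((n:ℝ)+1)^(-β)) := by
    intro n hn ih
    have hn1 : 1 ≤ n := le_trans hN'1 hn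
    have hn0 : (0:ℝ) < n := by exact_mod_cast hn1
    obtain ⟨⟨c1, c2⟩, c3⟩ := hN n (le_trans (le_max_left N 1) hn)
    set t := γ * ((n:ℝ)+1)^(-β) with hts
    have ht : 0 < t := by positivity
    -- g n ≤ t + (a/4) t^2
    have hgn : γ * (n:ℝ)^(-β) ≤ t + (a/4)*t^2 := by
      have h1 : γ * (n:ℝ)^(-β) ≤ (1 + β/n) * t := by
        have := gam_ratio hβ0 hβ1 n hn1
        calc γ * (n:ℝ)^(-β) ≤ γ * ((1 + β / n) * ((n : ℝ) + 1) ^ (-β)) :=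
              mul_le_mul_of_nonneg_left this hγ.le
          _ = (1 + β/n) * t := by ring
      have h2 : β / n ≤ (a/4) * t := by
        -- β/n = β * n^{β-1} * n^{-β} ≤ (aγ/8) * n^{-β} ≤ (aγ/8) * 2*(n+1)^{-β} = (a/4)*t
        have hx : (n:ℝ)^(β-1) * (n:ℝ)^(-β) = ((n:ℝ))⁻¹ := by
          rw [← Real.rpow_add hn0, ← Real.rpow_neg_one (n:ℝ)]
          congr 1
          ring
        have h3 : β / n ≤ (a*γ/8) * (n:ℝ)^(-β) := by
          rw [div_eq_mul_inv, ← hx, ← mul_assoc]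
          exact mul_le_mul_of_nonneg_right c3 (by positivity)
        have h4 : (a*γ/8) * (n:ℝ)^(-β) ≤ (a*γ/8) * (2 * ((n:ℝ)+1)^(-β)) :=
          mul_le_mul_of_nonneg_left (gam_two hβ0 hβ1 n hn1) (by positivity)
        calc β / n ≤ (a*γ/8) * (2 * ((n:ℝ)+1)^(-β)) := le_trans h3 h4
          _ = (a/4) * t := by rw [hts]; ring
      calc γ * (n:ℝ)^(-β) ≤ (1 + β/n) * t := h1
        _ = t + (β/n) * t := by ring
        _ ≤ t + ((a/4)*t) * t := by
            have := mul_le_mul_of_nonneg_right h2 ht.le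
            linarith
        _ = t + (a/4)*t^2 := by ring
    have hq0 : 0 ≤ 1 - a*t + b*t^2 := by
      have h0 : 0 ≤ b*t^2 := by positivity
      linarith
    have hq1 : 1 - a*t + b*t^2 ≤ 1 - (3*a/4)*t := by
      have h0 := mul_le_mul_of_nonneg_right c1 ht.le
      have h1 : b*t^2 = (b*t)*t := by ring
      have h2 : (a/4)*t = a*t/4 := by ring
      linarith
    have hq2 : (0:ℝ) ≤ 1 - (3*a/4)*t := by
      have h0 : (3*a/4)*t = (3/4)*(a*t) := by ring
      linarith
    have hrec' := hrec n hn1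
    rw [← hts] at hrec'
    have key : (1 - a*t + b*t^2) * u n + D*t^2 ≤
        (1 - (3*a/4)*t) * (C' * (t + (a/4)*t^2)) + D*t^2 := by
      have h1 : (1 - a*t + b*t^2) * u n ≤ (1 - (3*a/4)*t) * (C' * (t + (a/4)*t^2)) := by
        apply mul_le_mul hq1 _ (hu n) hq2
        calc u n ≤ C' * (γ * (n:ℝ)^(-β)) := ih
          _ ≤ C' * (t + (a/4)*t^2) := mul_le_mul_of_nonneg_left hgn hC0
      linarith
    have final : (1 - (3*a/4)*t) * (C' * (t + (a/4)*t^2)) + D*t^2 ≤ C' * t := by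
      have expand : (1 - (3*a/4)*t) * (C' * (t + (a/4)*t^2)) + D*t^2
          = C' * t - (a/2)*C'*t^2 - (3*a^2/16)*C'*t^3 + D*t^2 := by ring
      have f1 : D*t^2 ≤ (a/2)*C'*t^2 := by
        have h0 := mul_le_mul_of_nonneg_right hCD (sq_nonneg t)
        nlinarith [sq_nonneg t]
      have f2 : (0:ℝ) ≤ (3*a^2/16)*C'*t^3 := by positivity
      linarith [expand.le, expand.ge]
    calc u (n+1) ≤ (1 - a*t + b*t^2) * u n + D*t^2 := hrec'
      _ ≤ C' * t := le_trans key final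
  refine ⟨C', hC0, ?_⟩
  have main : ∀ n : ℕ, N' ≤ n → u n ≤ C' * (γ * (n:ℝ)^(-β)) := by
    intro n hn
    induction n, hn using Nat.le_induction with
    | base => exact base N' (by simp [hN'1])
    | succ n hn ih =>
        have := step n hn ih
        push_cast
        convert this using 3
  intro n hn
  rcases le_or_gt n N' with h | h
  · exact base n (Finset.mem_Icc.mpr ⟨hn, h⟩)
  · exact main n h.le

/-- The "power increase" lemma (Lemma 4.4, case `β < 1`): coupled recursions
`u_{n+1}^{(k)} ≤ (1 − a_k γ_{n+1} + b_k γ_{n+1}²) u_n^{(k)} + C_k(γ_{n+1}² + γ_{n+1} u_n^{(k+1)})`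
for `1 ≤ k ≤ K−1`, with `u_n^{(K)} ≤ C γ_n`, imply `u_n^{(k)} ≤ C' γ_n` for every `k ≤ K`. -/
theorem stmt_11 (K : ℕ) (hK : 2 ≤ K) (u : ℕ → ℕ → ℝ) (hu : ∀ k n, 0 ≤ u k n)
    (γ β : ℝ) (hγ : 0 < γ) (hβ : β ∈ Set.Ioo (0 : ℝ) 1)
    (a b C : ℕ → ℝ)
    (ha : ∀ k ∈ Finset.Icc 1 K, 0 < a k)
    (hb : ∀ k ∈ Finset.Icc 1 K, 0 ≤ b k)
    (hC : ∀ k ∈ Finset.Icc 1 K, 0 ≤ C k)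
    (hrec : ∀ k, 1 ≤ k → k ≤ K - 1 → ∀ n : ℕ,
      u k (n + 1) ≤
        (1 - a k * (γ * ((n : ℝ) + 1) ^ (-β)) + b k * (γ * ((n : ℝ) + 1) ^ (-β)) ^ 2) * u k n
          + C k * ((γ * ((n : ℝ) + 1) ^ (-β)) ^ 2 + (γ * ((n : ℝ) + 1) ^ (-β)) * u (k + 1) n))
    (CK : ℝ) (hCK : ∀ n : ℕ, 1 ≤ n → u K n ≤ CK * (γ * (n : ℝ) ^ (-β))) :
    ∃ C' : ℝ, ∀ k ∈ Finset.Icc 1 K, ∀ n : ℕ, 1 ≤ n → u k n ≤ C' * (γ * (n : ℝ) ^ (-β)) := by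
  obtain ⟨hβ0, hβ1⟩ := hβ
  -- downward induction on k, parameterized by j = distance to K
  have main : ∀ j : ℕ, ∀ k : ℕ, 1 ≤ k → k ≤ K → K ≤ k + j →
      ∃ C', 0 ≤ C' ∧ ∀ n : ℕ, 1 ≤ n → u k n ≤ C' * (γ * (n:ℝ)^(-β)) := by
    intro j
    induction j with
    | zero =>
        intro k hk1 hkK hKk
        have hkeq : k = K := le_antisymm hkK (by simpa using hKk)
        subst hkeq
        refine ⟨max CK 0, le_max_right _ _, fun n hn => ?_⟩
        have hg : 0 < γ * (n:ℝ)^(-β) := by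
          have : (0:ℝ) < n := by exact_mod_cast hn
          positivity
        exact le_trans (hCK n hn)
          (mul_le_mul_of_nonneg_right (le_max_left _ _) hg.le)
    | succ j ih =>
        intro k hk1 hkK hKk
        by_cases hcase : K ≤ k + j
        · exact ih k hk1 hkK hcase
        · -- here k < K, so k ≤ K - 1
          have hkK1 : k + 1 ≤ K := by omega
          have hkK' : k ≤ K - 1 := by omega
          have hkmem : k ∈ Finset.Icc 1 K := Finset.mem_Icc.mpr ⟨hk1, hkK⟩
          obtain ⟨C'', hC''0, hC''⟩ := ih (k+1) (by omega) hkK1 (by omega)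
          have hCk := hC k hkmem
          -- fold the coupled term into D = C k * (1 + 2 * C'')
          have hrec' : ∀ n : ℕ, 1 ≤ n → u k (n+1) ≤
              (1 - a k * (γ*((n:ℝ)+1)^(-β)) + b k * (γ*((n:ℝ)+1)^(-β))^2) * u k n
                + (C k * (1 + 2*C'')) * (γ*((n:ℝ)+1)^(-β))^2 := by
            intro n hn
            have hn0 : (0:ℝ) < n := by exact_mod_cast hn
            set t := γ * ((n:ℝ)+1)^(-β) with hts
            have ht : 0 < t := by positivity
            have h2 : t * u (k+1) n ≤ 2 * C'' * t^2 := by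
              have hu1 : u (k+1) n ≤ C'' * (γ * (n:ℝ)^(-β)) := hC'' n hn
              have hg2 : γ * (n:ℝ)^(-β) ≤ 2 * t := by
                have := gam_two hβ0 hβ1 n hn
                calc γ * (n:ℝ)^(-β) ≤ γ * (2 * ((n:ℝ)+1)^(-β)) :=
                      mul_le_mul_of_nonneg_left this hγ.le
                  _ = 2 * t := by rw [hts]; ring
              calc t * u (k+1) n ≤ t * (C'' * (γ * (n:ℝ)^(-β))) :=
                    mul_le_mul_of_nonneg_left hu1 ht.le
                _ ≤ t * (C'' * (2*t)) := by
                    apply mul_le_mul_of_nonneg_left _ ht.le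
                    exact mul_le_mul_of_nonneg_left hg2 hC''0
                _ = 2 * C'' * t^2 := by ring
            have h3 := hrec k hk1 hkK' n
            rw [← hts] at h3
            calc u k (n+1) ≤ (1 - a k * t + b k * t^2) * u k n + C k * (t^2 + t * u (k+1) n) := h3
              _ ≤ (1 - a k * t + b k * t^2) * u k n + C k * (t^2 + 2*C''*t^2) := by
                  have := mul_le_mul_of_nonneg_left h2 hCk
                  linarith
              _ = (1 - a k * t + b k * t^2) * u k n + (C k * (1 + 2*C'')) * t^2 := by ring
          have hD : 0 ≤ C k * (1 + 2*C'') := by positivity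
          exact single hγ hβ0 hβ1 (hu k) (ha k hkmem) (hb k hkmem) hD hrec'
  -- choose a uniform constant via Finset.sup'
  have H : ∀ k : ℕ, ∃ C', 0 ≤ C' ∧ (k ∈ Finset.Icc 1 K →
      ∀ n : ℕ, 1 ≤ n → u k n ≤ C' * (γ * (n:ℝ)^(-β))) := by
    intro k
    by_cases hk : k ∈ Finset.Icc 1 K
    · obtain ⟨C', h0, h1⟩ := main K k (Finset.mem_Icc.mp hk).1 (Finset.mem_Icc.mp hk).2
        (by omega)
      exact ⟨C', h0, fun _ => h1⟩
    · exact ⟨0, le_refl 0, fun h => absurd h hk⟩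
  choose f hf0 hf using H
  have hne : (Finset.Icc 1 K).Nonempty := ⟨1, Finset.mem_Icc.mpr ⟨le_refl 1, by omega⟩⟩
  refine ⟨(Finset.Icc 1 K).sup' hne f, fun k hk n hn => ?_⟩
  have hg : 0 < γ * (n:ℝ)^(-β) := by
    have : (0:ℝ) < n := by exact_mod_cast hn
    positivity
  calc u k n ≤ f k * (γ * (n:ℝ)^(-β)) := hf k hk n hn
    _ ≤ (Finset.Icc 1 K).sup' hne f * (γ * (n:ℝ)^(-β)) :=
        mul_le_mul_of_nonneg_right (Finset.le_sup' f hk) hg.le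
end
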